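/- Let (t_k)_{k≥1} be a strictly increasing sequence of positive reals with counting function n(t) = #{k ≥ 1 : t_k ≤ t}, let M ≥ 1 be an integer, let u ≥ 0, and let f(v) = log(1 + v² + v√2) − v√2 for v ≥ 0. Then for either choice of sign, Re[ Σ_{k=1}^M (Log(1 + u e^{±iπ/4}/t_k) − u e^{±iπ/4}/t_k) ] = (M/2) f(u/t_M) − (u³/√2) ∫_0^{t_M} n(t) / (t²(t² + u² + ut√2)) dt. -/

import Mathlib

open MeasureTheory intervalIntegral

/-- The counting function `n(x) = #{k ≥ 1 : t_k ≤ x}` of a sequence `(t_k)_{k≥1}`. -/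
noncomputable def countFun (t : ℕ → ℝ) (x : ℝ) : ℕ :=
  Nat.card {k : ℕ | 1 ≤ k ∧ t k ≤ x}

noncomputable def Ffun (u x : ℝ) : ℝ :=
  Real.log (1 + (u / x) ^ 2 + (u / x) * Real.sqrt 2) - (u / x) * Real.sqrt 2

lemma sqrt2_mul_self : Real.sqrt 2 * Real.sqrt 2 = 2 :=
  Real.mul_self_sqrt (by norm_num)

lemma denom_pos {u : ℝ} (hu : 0 ≤ u) {x : ℝ} (hx : 0 < x) :
    0 < x ^ 2 + u ^ 2 + u * x * Real.sqrt 2 := by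
  have h2 := Real.sqrt_nonneg 2
  nlinarith [mul_nonneg (mul_nonneg hu hx.le) h2, pow_pos hx 2, sq_nonneg u]

lemma inner_pos {u : ℝ} (hu : 0 ≤ u) {x : ℝ} (hx : 0 < x) :
    0 < 1 + (u / x) ^ 2 + (u / x) * Real.sqrt 2 := by
  have h2 := Real.sqrt_nonneg 2
  have hux : 0 ≤ u / x := div_nonneg hu hx.le
  nlinarith

lemma hasDerivAt_Ffun {u : ℝ} (hu : 0 ≤ u) {x : ℝ} (hx : 0 < x) :
    HasDerivAt (Ffun u)
      (Real.sqrt 2 * u ^ 3 / (x ^ 2 * (x ^ 2 + u ^ 2 + u * x * Real.sqrt 2))) x := by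
  have hx0 : x ≠ 0 := hx.ne'
  have h1 : HasDerivAt (fun y : ℝ => u / y) (-(u / x ^ 2)) x := by
    simpa [neg_div, Pi.div_def] using (hasDerivAt_const x u).div (hasDerivAt_id x) hx0
  have h2 : HasDerivAt (fun y : ℝ => 1 + (u / y) ^ 2 + (u / y) * Real.sqrt 2)
      ((2 : ℕ) * (u / x) ^ 1 * (-(u / x ^ 2)) + (-(u / x ^ 2)) * Real.sqrt 2) x :=
    ((h1.pow 2).const_add 1).add (h1.mul_const _)
  have hin : (1 + (u / x) ^ 2 + (u / x) * Real.sqrt 2) ≠ 0 := (inner_pos hu hx).ne'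
  have h3 := (h2.log hin).sub (h1.mul_const (Real.sqrt 2))
  refine h3.congr_deriv ?_
  symm
  have hd : (x ^ 2 + u ^ 2 + u * x * Real.sqrt 2) ≠ 0 := (denom_pos hu hx).ne'
  field_simp
  linear_combination (-(u^2*x)) * sqrt2_mul_self

lemma count_zero (t : ℕ → ℝ) (hmono : ∀ j k, 1 ≤ j → j < k → t j < t k)
    {x : ℝ} (h2 : x < t 1) : countFun t x = 0 := by
  have hset : {k : ℕ | 1 ≤ k ∧ t k ≤ x} = ∅ := by
    ext j
    simp only [Set.mem_setOf_eq, Set.mem_empty_iff_false, iff_false, not_and]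
    intro hj1 hjx
    have : t 1 ≤ t j := by
      rcases eq_or_lt_of_le hj1 with h | h
      · rw [← h]
      · exact (hmono 1 j le_rfl h).le
    linarith
  rw [countFun, hset]
  simp

lemma count_eq (t : ℕ → ℝ) (hmono : ∀ j k, 1 ≤ j → j < k → t j < t k)
    {k : ℕ} (hk : 1 ≤ k) {x : ℝ} (h1 : t k ≤ x) (h2 : x < t (k + 1)) :
    countFun t x = k := by
  have tmono : ∀ i j, 1 ≤ i → i ≤ j → t i ≤ t j := by
    intro i j hi hij
    rcases eq_or_lt_of_le hij with h | h
    · rw [h]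
    · exact (hmono i j hi h).le
  have hset : {j : ℕ | 1 ≤ j ∧ t j ≤ x} = ↑(Finset.Icc 1 k) := by
    ext j
    simp only [Set.mem_setOf_eq, Finset.coe_Icc, Set.mem_Icc]
    constructor
    · rintro ⟨hj1, hjx⟩
      refine ⟨hj1, ?_⟩
      by_contra h
      push_neg at h
      have : t (k + 1) ≤ t j := tmono (k + 1) j (by omega) (by omega)
      linarith
    · rintro ⟨hj1, hjk⟩
      exact ⟨hj1, le_trans (tmono j k hj1 hjk) h1⟩
  rw [countFun, hset, Nat.card_coe_set_eq, Set.ncard_coe_finset, Nat.card_Icc]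
  omega

lemma ae_eq_restrict_Ioc {f g : ℝ → ℝ} {a b : ℝ}
    (h : ∀ x ∈ Set.Ioc a b, x ≠ b → f x = g x) :
    f =ᵐ[volume.restrict (Set.Ioc a b)] g := by
  have hb : ∀ᵐ x : ℝ ∂volume, x ≠ b := by
    rw [ae_iff]
    have he : {x : ℝ | ¬ x ≠ b} = {b} := by ext x; simp
    rw [he]
    exact measure_singleton b
  have hb' : ∀ᵐ x : ℝ ∂volume.restrict (Set.Ioc a b), x ≠ b :=
    hb.filter_mono (ae_mono Measure.restrict_le_self)
  have hmem : ∀ᵐ x : ℝ ∂volume.restrict (Set.Ioc a b), x ∈ Set.Ioc a b :=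
    ae_restrict_mem measurableSet_Ioc
  filter_upwards [hb', hmem] with x hxb hxm
  exact h x hxm hxb

lemma contOn_inv_denom {u : ℝ} (hu : 0 ≤ u) {a b : ℝ} (ha : 0 < a) (c : ℝ) :
    ContinuousOn (fun x : ℝ => c / (x ^ 2 * (x ^ 2 + u ^ 2 + u * x * Real.sqrt 2)))
      (Set.Icc a b) := by
  apply ContinuousOn.div continuousOn_const (by fun_prop)
  intro x hx
  have hx0 : 0 < x := lt_of_lt_of_le ha hx.1
  exact (mul_pos (pow_pos hx0 2) (denom_pos hu hx0)).ne'

lemma integral_g {u : ℝ} (hu : 0 ≤ u) {a b : ℝ} (ha : 0 < a) (hab : a ≤ b) :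
    ∫ x in a..b, Real.sqrt 2 * u ^ 3 / (x ^ 2 * (x ^ 2 + u ^ 2 + u * x * Real.sqrt 2))
      = Ffun u b - Ffun u a := by
  apply intervalIntegral.integral_eq_sub_of_hasDerivAt
  · intro x hx
    rw [Set.uIcc_of_le hab] at hx
    exact hasDerivAt_Ffun hu (lt_of_lt_of_le ha hx.1)
  · apply ContinuousOn.intervalIntegrable
    rw [Set.uIcc_of_le hab]
    exact contOn_inv_denom hu ha _

/-- main induction -/
lemma key_induction (t : ℕ → ℝ)
    (hpos : ∀ k, 1 ≤ k → 0 < t k)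
    (hmono : ∀ j k, 1 ≤ j → j < k → t j < t k)
    (u : ℝ) (hu : 0 ≤ u) :
    ∀ M, 1 ≤ M →
      IntervalIntegrable
        (fun x => ((countFun t x : ℕ) : ℝ) / (x ^ 2 * (x ^ 2 + u ^ 2 + u * x * Real.sqrt 2)))
        volume 0 (t M) ∧
      Real.sqrt 2 * u ^ 3 *
          ∫ x in (0 : ℝ)..(t M),
            ((countFun t x : ℕ) : ℝ) / (x ^ 2 * (x ^ 2 + u ^ 2 + u * x * Real.sqrt 2))
        = M * Ffun u (t M) - ∑ k ∈ Finset.Icc 1 M, Ffun u (t k) := by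
  intro M hM
  induction M, hM using Nat.le_induction with
  | base =>
    have h1 : 0 < t 1 := hpos 1 le_rfl
    have hae : (fun x => ((countFun t x : ℕ) : ℝ) /
          (x ^ 2 * (x ^ 2 + u ^ 2 + u * x * Real.sqrt 2)))
        =ᵐ[volume.restrict (Set.Ioc 0 (t 1))] (fun _ => (0 : ℝ)) := by
      apply ae_eq_restrict_Ioc
      intro x hx hxb
      have : x < t 1 := lt_of_le_of_ne hx.2 hxb
      rw [count_zero t hmono this]
      simp
    constructor
    · rw [intervalIntegrable_iff_integrableOn_Ioc_of_le h1.le]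
      exact (integrable_zero _ _ _).congr hae.symm
    · rw [intervalIntegral.integral_of_le h1.le, MeasureTheory.integral_congr_ae hae]
      simp
  | succ M hM ih =>
    have ha : 0 < t M := hpos M hM
    have hab : t M < t (M + 1) := hmono M (M + 1) hM (by omega)
    have hb : 0 < t (M + 1) := lt_trans ha hab
    set I : ℝ → ℝ :=
      fun x => ((countFun t x : ℕ) : ℝ) / (x ^ 2 * (x ^ 2 + u ^ 2 + u * x * Real.sqrt 2)) with hI
    have hae : I =ᵐ[volume.restrict (Set.Ioc (t M) (t (M + 1)))]
        (fun x => (M : ℝ) / (x ^ 2 * (x ^ 2 + u ^ 2 + u * x * Real.sqrt 2))) := by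
      apply ae_eq_restrict_Ioc
      intro x hx hxb
      have h1 : t M ≤ x := hx.1.le
      have h2 : x < t (M + 1) := lt_of_le_of_ne hx.2 hxb
      simp only [hI, count_eq t hmono hM h1 h2]
    have hJint : IntervalIntegrable
        (fun x => (M : ℝ) / (x ^ 2 * (x ^ 2 + u ^ 2 + u * x * Real.sqrt 2)))
        volume (t M) (t (M + 1)) := by
      apply ContinuousOn.intervalIntegrable
      rw [Set.uIcc_of_le hab.le]
      exact contOn_inv_denom hu ha _
    have hIint : IntervalIntegrable I volume (t M) (t (M + 1)) := by
      rw [intervalIntegrable_iff_integrableOn_Ioc_of_le hab.le] at hJint ⊢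
      exact hJint.congr hae.symm
    have hint : ∫ x in (t M)..(t (M + 1)), I x
        = ∫ x in (t M)..(t (M + 1)),
            (M : ℝ) / (x ^ 2 * (x ^ 2 + u ^ 2 + u * x * Real.sqrt 2)) := by
      rw [intervalIntegral.integral_of_le hab.le, intervalIntegral.integral_of_le hab.le]
      exact MeasureTheory.integral_congr_ae hae
    have hsplit : ∫ x in (0 : ℝ)..(t (M + 1)), I x
        = (∫ x in (0 : ℝ)..(t M), I x) + ∫ x in (t M)..(t (M + 1)), I x :=
      (intervalIntegral.integral_add_adjacent_intervals ih.1 hIint).symm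
    have hmid : Real.sqrt 2 * u ^ 3 * ∫ x in (t M)..(t (M + 1)), I x
        = M * (Ffun u (t (M + 1)) - Ffun u (t M)) := by
      rw [hint]
      have e1 : ∀ x : ℝ, (M : ℝ) / (x ^ 2 * (x ^ 2 + u ^ 2 + u * x * Real.sqrt 2))
          = (M : ℝ) * (1 / (x ^ 2 * (x ^ 2 + u ^ 2 + u * x * Real.sqrt 2))) := by
        intro x; ring
      have e2 : ∀ x : ℝ, Real.sqrt 2 * u ^ 3 / (x ^ 2 * (x ^ 2 + u ^ 2 + u * x * Real.sqrt 2))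
          = (Real.sqrt 2 * u ^ 3) * (1 / (x ^ 2 * (x ^ 2 + u ^ 2 + u * x * Real.sqrt 2))) := by
        intro x; ring
      simp only [e1]
      rw [intervalIntegral.integral_const_mul]
      rw [← integral_g hu ha hab.le]
      simp only [e2]
      rw [intervalIntegral.integral_const_mul]
      ring
    constructor
    · exact ih.1.trans hIint
    · rw [hsplit, mul_add, ih.2, hmid, Finset.sum_Icc_succ_top (by omega : 1 ≤ M + 1)]
      push_cast
      ring

lemma term_re {u : ℝ} (hu : 0 ≤ u) {τ : ℝ} (hτ : 0 < τ) {c : ℝ}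
    (hc : Real.cos c = Real.sqrt 2 / 2) :
    (Complex.log (1 + (u : ℂ) * Complex.exp ((c : ℂ) * Complex.I) / (τ : ℂ))
        - (u : ℂ) * Complex.exp ((c : ℂ) * Complex.I) / (τ : ℂ)).re
      = (1 / 2) * Ffun u τ := by
  set a : ℝ := u / τ with haa
  have ha : 0 ≤ a := div_nonneg hu hτ.le
  have hw : (u : ℂ) * Complex.exp ((c : ℂ) * Complex.I) / (τ : ℂ)
      = (a : ℂ) * Complex.exp ((c : ℂ) * Complex.I) := by
    rw [haa]
    push_cast
    field_simp
  rw [hw]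
  have hre : ((a : ℂ) * Complex.exp ((c : ℂ) * Complex.I)).re = a * Real.cos c := by
    rw [Complex.re_ofReal_mul, Complex.exp_ofReal_mul_I_re]
  have him : ((a : ℂ) * Complex.exp ((c : ℂ) * Complex.I)).im = a * Real.sin c := by
    rw [Complex.im_ofReal_mul, Complex.exp_ofReal_mul_I_im]
  have hsc : Real.sin c ^ 2 = 1 / 2 := by
    have := Real.sin_sq_add_cos_sq c
    rw [hc] at this
    linear_combination this - (1/4) * sqrt2_mul_self
  have hnormSq : Complex.normSq (1 + (a : ℂ) * Complex.exp ((c : ℂ) * Complex.I))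
      = 1 + a ^ 2 + a * Real.sqrt 2 := by
    rw [Complex.normSq_apply, Complex.add_re, Complex.add_im, Complex.one_re, Complex.one_im,
      hre, him, hc]
    linear_combination (a^2/4) * sqrt2_mul_self + a^2 * hsc
  have hq : (0 : ℝ) < 1 + a ^ 2 + a * Real.sqrt 2 := by
    nlinarith [Real.sqrt_nonneg 2, sq_nonneg a]
  rw [Complex.sub_re, Complex.log_re, Complex.norm_def, hnormSq, Real.log_sqrt hq.le,
    hre, hc]
  unfold Ffun
  rw [haa]
  ring

theorem re_Hsum_eq (t : ℕ → ℝ)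
    (hpos : ∀ k, 1 ≤ k → 0 < t k)
    (hmono : ∀ j k, 1 ≤ j → j < k → t j < t k)
    (M : ℕ) (hM : 1 ≤ M) (u : ℝ) (hu : 0 ≤ u)
    (sgn : ℝ) (hsgn : sgn = 1 ∨ sgn = -1) :
    (∑ k ∈ Finset.Icc 1 M,
        (Complex.log (1 + (u : ℂ) * Complex.exp ((sgn : ℂ) * Complex.I * (Real.pi / 4)) / (t k : ℂ))
          - (u : ℂ) * Complex.exp ((sgn : ℂ) * Complex.I * (Real.pi / 4)) / (t k : ℂ))).re
      = (M : ℝ) / 2 *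
          (Real.log (1 + (u / t M) ^ 2 + (u / t M) * Real.sqrt 2) - (u / t M) * Real.sqrt 2)
        - u ^ 3 / Real.sqrt 2 * ∫ x in (0 : ℝ)..(t M),
            ((countFun t x : ℕ) : ℝ) / (x ^ 2 * (x ^ 2 + u ^ 2 + u * x * Real.sqrt 2)) := by
  have hexp : (sgn : ℂ) * Complex.I * (Real.pi / 4)
      = ((sgn * (Real.pi / 4) : ℝ) : ℂ) * Complex.I := by
    push_cast
    ring
  have hc : Real.cos (sgn * (Real.pi / 4)) = Real.sqrt 2 / 2 := by
    rcases hsgn with h | h <;> rw [h]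
    · rw [one_mul, Real.cos_pi_div_four]
    · rw [neg_one_mul, Real.cos_neg, Real.cos_pi_div_four]
  have hL : (∑ k ∈ Finset.Icc 1 M,
        (Complex.log (1 + (u : ℂ) * Complex.exp ((sgn : ℂ) * Complex.I * (Real.pi / 4)) / (t k : ℂ))
          - (u : ℂ) * Complex.exp ((sgn : ℂ) * Complex.I * (Real.pi / 4)) / (t k : ℂ))).re
      = (1 / 2) * ∑ k ∈ Finset.Icc 1 M, Ffun u (t k) := by
    rw [Complex.re_sum, Finset.mul_sum]
    apply Finset.sum_congr rfl
    intro k hk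
    rw [Finset.mem_Icc] at hk
    rw [hexp]
    exact term_re hu (hpos k hk.1) hc
  have hkey := (key_induction t hpos hmono u hu M hM).2
  have hhalf : u ^ 3 / Real.sqrt 2 = Real.sqrt 2 * u ^ 3 / 2 := by
    have h2 : Real.sqrt 2 ≠ 0 := by
      have : (0:ℝ) < Real.sqrt 2 := Real.sqrt_pos.2 (by norm_num)
      exact this.ne'
    rw [div_eq_div_iff h2 (by norm_num : (2:ℝ) ≠ 0)]
    linear_combination (-u^3) * sqrt2_mul_self
  rw [hL, hhalf]
  have : Real.log (1 + (u / t M) ^ 2 + (u / t M) * Real.sqrt 2) - (u / t M) * Real.sqrt 2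
      = Ffun u (t M) := rfl
  rw [this]
  set A := ∫ x in (0 : ℝ)..(t M),
      ((countFun t x : ℕ) : ℝ) / (x ^ 2 * (x ^ 2 + u ^ 2 + u * x * Real.sqrt 2)) with hA
  linear_combination (1/2) * hkey
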